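/- arXiv:2602.14008 — 2 statements merged into one kernel-verified Lean document; each statement's English description precedes it below -/
import Mathlib

section
/- Let G be an oriented graph on 6 vertices with at least 13 arcs. Then G contains at least 4 transitive triangles. -/
/-- An oriented graph: no loops and no directed 2-cycles (in particular no parallel arcs). -/
def IsOriented {V : Type*} (G : V → V → Prop) : Prop :=
  ∀ a b, G a b → a ≠ b ∧ ¬ G b a

/-- Number of arcs of a digraph. -/
noncomputable def arcCount {V : Type*} (G : V → V → Prop) : ℕ :=
  {p : V × V | G p.1 p.2}.ncard

namespace FourTransAux

open Finset

abbrev T3 := Fin 6 × Fin 6 × Fin 6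

/-- increasing triples -/
def S3 : Finset T3 := univ.filter fun t => t.1 < t.2.1 ∧ t.2.1 < t.2.2

lemma S3card : S3.card = 20 := by decide

lemma tri_card (m : Fin 6 × Fin 6) (h : m.1 < m.2) :
    (S3.filter fun t => (m.1 = t.1 ∨ m.1 = t.2.1 ∨ m.1 = t.2.2) ∧
      (m.2 = t.1 ∨ m.2 = t.2.1 ∨ m.2 = t.2.2)).card = 4 := by
  revert h; revert m; decide

def sort3 (x y z : Fin 6) : Fin 6 × Fin 6 × Fin 6 :=
  if x ≤ y then
    if y ≤ z then (x,y,z) else if x ≤ z then (x,z,y) else (z,x,y)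
  else
    if x ≤ z then (y,x,z) else if y ≤ z then (y,z,x) else (z,y,x)

lemma sort3_spec {a b c : Fin 6} (h1 : a < b) (h2 : b < c) :
    sort3 a b c = (a,b,c) ∧ sort3 a c b = (a,b,c) ∧ sort3 b a c = (a,b,c) ∧
    sort3 b c a = (a,b,c) ∧ sort3 c a b = (a,b,c) ∧ sort3 c b a = (a,b,c) := by
  simp only [Fin.lt_def] at h1 h2
  refine ⟨?_, ?_, ?_, ?_, ?_, ?_⟩ <;>
    (unfold sort3; split_ifs <;> first
      | rfl
      | (exfalso; simp only [Fin.le_def, not_le] at *; omega))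

section
variable (G : Fin 6 → Fin 6 → Prop) [∀ a b, Decidable (G a b)]

def edg (a b : Fin 6) : Prop := G a b ∨ G b a
instance (a b : Fin 6) : Decidable (edg G a b) := by unfold edg; infer_instance

def MM : Finset (Fin 6 × Fin 6) := univ.filter fun m => m.1 < m.2 ∧ ¬ edg G m.1 m.2

def comp3 (t : T3) : Prop := edg G t.1 t.2.1 ∧ edg G t.2.1 t.2.2 ∧ edg G t.1 t.2.2
instance (t : T3) : Decidable (comp3 G t) := by unfold comp3; infer_instance

def cyc (S : Fin 6 → Fin 6 → Prop) [∀ a b, Decidable (S a b)] (t : T3) : Prop :=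
  (S t.1 t.2.1 ∧ S t.2.1 t.2.2 ∧ S t.2.2 t.1) ∨ (S t.2.1 t.1 ∧ S t.2.2 t.2.1 ∧ S t.1 t.2.2)
instance (S : Fin 6 → Fin 6 → Prop) [∀ a b, Decidable (S a b)] (t : T3) :
    Decidable (cyc S t) := by unfold cyc; infer_instance

def RR (a b : Fin 6) : Prop := G a b ∨ (¬ G a b ∧ ¬ G b a ∧ a < b)
instance (a b : Fin 6) : Decidable (RR G a b) := by unfold RR; infer_instance

set_option linter.unusedSectionVars false

variable {G}

lemma M_card_le (hG : IsOriented G)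
    (hE : 13 ≤ (univ.filter fun p : Fin 6 × Fin 6 => G p.1 p.2).card) :
    (MM G).card ≤ 2 := by
  classical
  set A := univ.filter fun p : Fin 6 × Fin 6 => G p.1 p.2 with hA
  have hsub : MM G ⊆ univ.filter fun m : Fin 6 × Fin 6 => m.1 < m.2 := by
    intro m hm
    simp only [MM, mem_filter] at hm ⊢
    exact ⟨hm.1, hm.2.1⟩
  have hinj : A.card ≤ ((univ.filter fun m : Fin 6 × Fin 6 => m.1 < m.2) \ MM G).card := by
    apply Finset.card_le_card_of_injOn (fun p => if p.1 < p.2 then p else (p.2, p.1))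
    · intro p hp
      simp only [hA, mem_coe, mem_filter] at hp
      have hne := (hG p.1 p.2 hp.2).1
      have hedge : edg G p.1 p.2 := Or.inl hp.2
      rcases lt_or_gt_of_ne hne with h | h
      · simp only [if_pos h, mem_coe, mem_sdiff, mem_filter, MM]
        exact ⟨⟨mem_univ _, h⟩, by simp [h, hedge]⟩
      · simp only [if_neg (not_lt.mpr (le_of_lt h)), mem_coe, mem_sdiff, mem_filter, MM]
        refine ⟨⟨mem_univ _, h⟩, ?_⟩
        simp only [mem_filter, not_and, not_not]
        intro _ _
        exact Or.symm hedge
    · intro p hp q hq hpq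
      simp only [hA, Finset.coe_filter, Set.mem_setOf_eq] at hp hq
      simp only [] at hpq
      split_ifs at hpq with h1 h2 h2 <;> rw [Prod.ext_iff] at hpq
      · exact Prod.ext hpq.1 hpq.2
      · exfalso
        have := hp.2; rw [hpq.1, hpq.2] at this
        exact (hG q.1 q.2 hq.2).2 this
      · exfalso
        have := hq.2; rw [← hpq.1, ← hpq.2] at this
        exact (hG p.1 p.2 hp.2).2 this
      · exact Prod.ext hpq.2 hpq.1
  have hcard : ((univ.filter fun m : Fin 6 × Fin 6 => m.1 < m.2) \ MM G).card
      = 15 - (MM G).card := by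
    have h15 : (univ.filter fun m : Fin 6 × Fin 6 => m.1 < m.2).card = 15 := by decide
    rw [card_sdiff_of_subset hsub, h15]
  omega

lemma comp_card (hM : (MM G).card ≤ 2) : 12 ≤ (S3.filter (comp3 G)).card := by
  classical
  have hbadsub : (S3.filter fun t => ¬ comp3 G t) ⊆
      (MM G).biUnion (fun m => S3.filter fun t => (m.1 = t.1 ∨ m.1 = t.2.1 ∨ m.1 = t.2.2) ∧
        (m.2 = t.1 ∨ m.2 = t.2.1 ∨ m.2 = t.2.2)) := by
    intro t ht
    simp only [mem_filter, comp3, not_and_or] at ht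
    obtain ⟨htS, hbad⟩ := ht
    have hlt : t.1 < t.2.1 ∧ t.2.1 < t.2.2 := by simpa [S3] using htS
    rw [mem_biUnion]
    rcases hbad with h | h | h
    · exact ⟨(t.1, t.2.1), by simp [MM, hlt.1, h], by simp [mem_filter, htS]⟩
    · exact ⟨(t.2.1, t.2.2), by simp [MM, hlt.2, h], by simp [mem_filter, htS]⟩
    · exact ⟨(t.1, t.2.2), by simp [MM, hlt.1.trans hlt.2, h], by simp [mem_filter, htS]⟩
  have hbad : (S3.filter fun t => ¬ comp3 G t).card ≤ 8 := by
    calc (S3.filter fun t => ¬ comp3 G t).card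
        ≤ ((MM G).biUnion _).card := card_le_card hbadsub
      _ ≤ ∑ m ∈ MM G, (S3.filter fun t => (m.1 = t.1 ∨ m.1 = t.2.1 ∨ m.1 = t.2.2) ∧
            (m.2 = t.1 ∨ m.2 = t.2.1 ∨ m.2 = t.2.2)).card := card_biUnion_le
      _ = ∑ m ∈ MM G, 4 := by
          apply Finset.sum_congr rfl
          intro m hm
          exact tri_card m (by simp only [MM, mem_filter] at hm; exact hm.2.1)
      _ = 4 * (MM G).card := by rw [Finset.sum_const]; ring
      _ ≤ 8 := by omega
  have := card_filter_add_card_filter_not (s := S3) (p := comp3 G)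
  have h20 : S3.card = 20 := S3card
  omega

lemma R_ne (hG : IsOriented G) {a b : Fin 6} (h : RR G a b) : a ≠ b := by
  rcases h with h | h
  · exact (hG a b h).1
  · exact ne_of_lt h.2.2

lemma R_asymm (hG : IsOriented G) {a b : Fin 6} (h : RR G a b) : ¬ RR G b a := by
  rcases h with h | h
  · rintro (h' | h')
    · exact (hG a b h).2 h'
    · exact h'.2.1 h
  · rintro (h' | h')
    · exact h.2.1 h'
    · exact absurd h.2.2 (not_lt.mpr (le_of_lt h'.2.2))

lemma R_total {a b : Fin 6} (h : a ≠ b) : RR G a b ∨ RR G b a := by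
  by_cases h1 : G a b
  · exact Or.inl (Or.inl h1)
  · by_cases h2 : G b a
    · exact Or.inr (Or.inl h2)
    · rcases lt_or_gt_of_ne h with hlt | hlt
      · exact Or.inl (Or.inr ⟨h1, h2, hlt⟩)
      · exact Or.inr (Or.inr ⟨h2, h1, hlt⟩)

lemma AR_card (hG : IsOriented G) :
    (univ.filter fun p : Fin 6 × Fin 6 => RR G p.1 p.2).card = 15 := by
  set A := univ.filter fun p : Fin 6 × Fin 6 => RR G p.1 p.2 with hA
  set D := univ.filter fun p : Fin 6 × Fin 6 => p.1 ≠ p.2 with hD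
  have hsub : A ⊆ D := by
    intro p hp
    simp only [hA, hD, mem_filter] at *
    exact ⟨hp.1, R_ne hG hp.2⟩
  have hbij : A.card = (D \ A).card := by
    apply card_nbij' (fun p => (p.2, p.1)) (fun p => (p.2, p.1))
    · intro p hp
      simp only [hA, hD, mem_coe, mem_sdiff, mem_filter] at *
      exact ⟨⟨mem_univ _, (R_ne hG hp.2).symm⟩, fun h => R_asymm hG hp.2 h.2⟩
    · intro p hp
      simp only [hA, hD, mem_coe, mem_sdiff, mem_filter] at *
      rcases R_total (G := G) hp.1.2 with h | h
      · exact absurd ⟨mem_univ _, h⟩ hp.2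
      · exact ⟨mem_univ _, h⟩
    · intro p _; rfl
    · intro p _; rfl
  have hD30 : D.card = 30 := by rw [hD]; decide
  have := card_sdiff_of_subset hsub
  omega

lemma sum_deg (hG : IsOriented G) :
    ∑ v : Fin 6, (univ.filter fun w => RR G v w).card = 15 := by
  rw [← AR_card hG]
  rw [Finset.card_filter, Fintype.sum_prod_type]
  apply Finset.sum_congr rfl
  intro v _
  rw [Finset.card_filter]

lemma pairs_card (v : Fin 6) :
    2 * (univ.filter fun q : Fin 6 × Fin 6 => q.1 < q.2 ∧ RR G v q.1 ∧ RR G v q.2).card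
      + (univ.filter fun w => RR G v w).card
      = (univ.filter fun w => RR G v w).card * (univ.filter fun w => RR G v w).card := by
  classical
  set s := univ.filter fun w => RR G v w with hs
  have h1 : (univ.filter fun q : Fin 6 × Fin 6 => q.1 < q.2 ∧ RR G v q.1 ∧ RR G v q.2)
      = s.offDiag.filter fun q => q.1 < q.2 := by
    ext q
    simp only [mem_filter, Finset.mem_offDiag, hs, mem_univ, true_and]
    constructor
    · rintro ⟨hlt, h1, h2⟩; exact ⟨⟨h1, h2, ne_of_lt hlt⟩, hlt⟩
    · rintro ⟨⟨h1, h2, _⟩, hlt⟩; exact ⟨hlt, h1, h2⟩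
  have h2 : (s.offDiag.filter fun q => q.1 < q.2).card
      = (s.offDiag.filter fun q => ¬ q.1 < q.2).card := by
    apply card_nbij' (fun p => (p.2, p.1)) (fun p => (p.2, p.1))
    · intro p hp
      simp only [mem_coe, mem_filter, Finset.mem_offDiag] at *
      exact ⟨⟨hp.1.2.1, hp.1.1, hp.1.2.2.symm⟩, not_lt.mpr (le_of_lt hp.2)⟩
    · intro p hp
      simp only [mem_coe, mem_filter, Finset.mem_offDiag] at *
      exact ⟨⟨hp.1.2.1, hp.1.1, hp.1.2.2.symm⟩, lt_of_le_of_ne (not_lt.mp hp.2) hp.1.2.2.symm⟩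
    · intro p _; rfl
    · intro p _; rfl
  have h3 := card_filter_add_card_filter_not (s := s.offDiag) (p := fun q => q.1 < q.2)
  have h4 : s.offDiag.card = s.card * s.card - s.card := Finset.offDiag_card s
  have h5 : s.card ≤ s.card * s.card := by nlinarith
  rw [h1]
  set m := s.card * s.card with hm
  omega

variable (G) in
def Pset : Finset T3 := univ.filter fun q => q.2.1 < q.2.2 ∧ RR G q.1 q.2.1 ∧ RR G q.1 q.2.2

lemma key5 (d : ℕ) : 5 * d ≤ d * d + 6 := by
  rcases le_or_gt d 4 with h | h
  · interval_cases d <;> norm_num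
  · calc 5 * d ≤ d * d := Nat.mul_le_mul_right d h
      _ ≤ d * d + 6 := Nat.le_add_right _ _

lemma P_card (hG : IsOriented G) : 12 ≤ (Pset G).card := by
  classical
  set d : Fin 6 → ℕ := fun v => (univ.filter fun w => RR G v w).card with hd
  have hP : (Pset G).card = ∑ v : Fin 6,
      (univ.filter fun q : Fin 6 × Fin 6 => q.1 < q.2 ∧ RR G v q.1 ∧ RR G v q.2).card := by
    rw [Pset, Finset.card_filter, Fintype.sum_prod_type]
    apply Finset.sum_congr rfl
    intro v _
    rw [Finset.card_filter]
  have hpc : ∀ v : Fin 6, 2 * (univ.filter fun q : Fin 6 × Fin 6 =>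
      q.1 < q.2 ∧ RR G v q.1 ∧ RR G v q.2).card + d v = d v * d v := fun v => pairs_card v
  have hsum : ∑ v : Fin 6, d v = 15 := sum_deg hG
  have hb : ∑ v : Fin 6, 5 * d v ≤ ∑ v : Fin 6, (d v * d v + 6) :=
    Finset.sum_le_sum fun v _ => key5 (d v)
  have e1 : ∑ v : Fin 6, 5 * d v = 75 := by rw [← Finset.mul_sum, hsum]; norm_num
  have e2 : ∑ v : Fin 6, (d v * d v + 6) = (∑ v : Fin 6, d v * d v) + 36 := by
    rw [Finset.sum_add_distrib, Finset.sum_const]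
    simp
  have e3 : ∑ v : Fin 6, d v * d v = 2 * (Pset G).card + 15 := by
    calc ∑ v : Fin 6, d v * d v
        = ∑ v : Fin 6, (2 * (univ.filter fun q : Fin 6 × Fin 6 =>
            q.1 < q.2 ∧ RR G v q.1 ∧ RR G v q.2).card + d v) := by
          exact (Finset.sum_congr rfl fun v _ => (hpc v).symm)
      _ = 2 * (∑ v : Fin 6, (univ.filter fun q : Fin 6 × Fin 6 =>
            q.1 < q.2 ∧ RR G v q.1 ∧ RR G v q.2).card) + ∑ v : Fin 6, d v := by
          rw [Finset.sum_add_distrib, Finset.mul_sum]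
      _ = 2 * (Pset G).card + 15 := by rw [← hP, hsum]
  omega

lemma sort3_cases (hG : IsOriented G) {v a b : Fin 6} (hab : a < b)
    (h1 : RR G v a) (h2 : RR G v b) :
    (v < a ∧ sort3 v a b = (v,a,b)) ∨ (a < v ∧ v < b ∧ sort3 v a b = (a,v,b)) ∨
      (b < v ∧ sort3 v a b = (a,b,v)) := by
  rcases lt_trichotomy v a with h | h | h
  · exact Or.inl ⟨h, (sort3_spec h hab).1⟩
  · exact absurd h (R_ne hG h1)
  · rcases lt_trichotomy v b with h' | h' | h'
    · exact Or.inr (Or.inl ⟨h, h', (sort3_spec h h').2.2.1⟩)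
    · exact absurd h' (R_ne hG h2)
    · exact Or.inr (Or.inr ⟨h', (sort3_spec hab h').2.2.2.2.1⟩)

lemma noncyc_card (hG : IsOriented G) :
    12 ≤ (S3.filter fun t => ¬ cyc (RR G) t).card := by
  classical
  refine le_trans (P_card hG) ?_
  apply Finset.card_le_card_of_injOn (fun q => sort3 q.1 q.2.1 q.2.2)
  · rintro ⟨v, a, b⟩ hq
    simp only [Pset, mem_coe, mem_filter, mem_univ, true_and] at hq
    obtain ⟨hab, h1, h2⟩ := hq
    rcases sort3_cases hG hab h1 h2 with ⟨hlt, he⟩ | ⟨hlt1, hlt2, he⟩ | ⟨hlt, he⟩ <;>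
      simp only [he, mem_coe, mem_filter] <;>
      simp only [coe_filter, Set.mem_setOf_eq, mem_filter, S3, mem_univ, true_and, cyc]
    · refine ⟨⟨hlt, hab⟩, ?_⟩
      rintro (⟨c1, c2, c3⟩ | ⟨c1, c2, c3⟩)
      · exact R_asymm hG h2 c3
      · exact R_asymm hG h1 c1
    · refine ⟨⟨hlt1, hlt2⟩, ?_⟩
      rintro (⟨c1, c2, c3⟩ | ⟨c1, c2, c3⟩)
      · exact R_asymm hG h1 c1
      · exact R_asymm hG h2 c2
    · refine ⟨⟨hab, hlt⟩, ?_⟩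
      rintro (⟨c1, c2, c3⟩ | ⟨c1, c2, c3⟩)
      · exact R_asymm hG h2 c2
      · exact R_asymm hG h1 c3
  · rintro ⟨v, a, b⟩ hq ⟨v', a', b'⟩ hq' heq
    simp only [Pset, coe_filter, Set.mem_setOf_eq, mem_univ, true_and] at hq hq'
    obtain ⟨hab, h1, h2⟩ := hq
    obtain ⟨hab', h1', h2'⟩ := hq'
    simp only at heq
    rcases sort3_cases hG hab h1 h2 with ⟨hlt, he⟩ | ⟨hlt1, hlt2, he⟩ | ⟨hlt, he⟩ <;>
      rcases sort3_cases hG hab' h1' h2' with ⟨hlt', he'⟩ | ⟨hlt1', hlt2', he'⟩ | ⟨hlt', he'⟩ <;>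
      rw [he, he'] at heq <;> simp only [Prod.mk.injEq] at heq ⊢ <;>
      obtain ⟨e1, e2, e3⟩ := heq <;>
      first
        | exact ⟨e1, e2, e3⟩
        | exact ⟨e2, e1, e3⟩
        | exact ⟨e3, e1, e2⟩
        | (subst e1; subst e2; subst e3
           first
             | exact absurd h1' (R_asymm hG h1)
             | exact absurd h1' (R_asymm hG h2)
             | exact absurd h2' (R_asymm hG h1)
             | exact absurd h2' (R_asymm hG h2)
             | exact absurd h1 (R_asymm hG h1')
             | exact absurd h1 (R_asymm hG h2')
             | exact absurd h2 (R_asymm hG h1')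
             | exact absurd h2 (R_asymm hG h2'))

lemma cycG_card (hG : IsOriented G) : (S3.filter (cyc G)).card ≤ 8 := by
  classical
  have hsub : S3.filter (cyc G) ⊆ S3.filter (cyc (RR G)) := by
    apply Finset.monotone_filter_right
    rintro t _ (⟨c1, c2, c3⟩ | ⟨c1, c2, c3⟩)
    · exact Or.inl ⟨Or.inl c1, Or.inl c2, Or.inl c3⟩
    · exact Or.inr ⟨Or.inl c1, Or.inl c2, Or.inl c3⟩
  have h1 := noncyc_card hG
  have h2 := card_filter_add_card_filter_not (s := S3) (p := cyc (RR G))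
  have h3 := Finset.card_le_card hsub
  have h20 : S3.card = 20 := S3card
  omega

variable (G) in
def phi (t : T3) : T3 :=
  if G t.1 t.2.1 then
    (if G t.2.1 t.2.2 then (t.1, t.2.1, t.2.2)
     else if G t.1 t.2.2 then (t.1, t.2.2, t.2.1) else (t.2.2, t.1, t.2.1))
  else
    (if G t.2.1 t.2.2 then
      (if G t.1 t.2.2 then (t.2.1, t.1, t.2.2) else (t.2.1, t.2.2, t.1))
     else (t.2.2, t.2.1, t.1))

lemma main_count (hG : IsOriented G)
    (hE : 13 ≤ (univ.filter fun p : Fin 6 × Fin 6 => G p.1 p.2).card) :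
    4 ≤ (univ.filter fun p : T3 => G p.1 p.2.1 ∧ G p.2.1 p.2.2 ∧ G p.1 p.2.2).card := by
  classical
  have hM := M_card_le hG hE
  have hcomp := comp_card hM
  have hcyc := cycG_card hG
  -- the transitive (complete, non-cyclic) increasing triples
  have htra : 4 ≤ ((S3.filter (comp3 G)).filter fun t => ¬ cyc G t).card := by
    have hs : (S3.filter (comp3 G)).filter (cyc G) ⊆ S3.filter (cyc G) := by
      intro t ht
      simp only [mem_filter] at ht ⊢
      exact ⟨ht.1.1, ht.2⟩
    have h2 := card_filter_add_card_filter_not (s := S3.filter (comp3 G)) (p := cyc G)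
    have h3 := Finset.card_le_card hs
    omega
  refine le_trans htra ?_
  apply Finset.card_le_card_of_injOn (phi G)
  · rintro ⟨a, bc⟩ ht
    obtain ⟨b, c⟩ := bc
    simp only [mem_coe, mem_filter] at ht
    simp only [mem_coe, mem_filter, S3, mem_univ, true_and, comp3, edg, cyc] at ht
    obtain ⟨⟨⟨hab, hbc⟩, e1, e2, e3⟩, hnc⟩ := ht
    refine Finset.mem_coe.mpr (Finset.mem_filter.mpr ⟨Finset.mem_univ _, ?_⟩)
    simp only [phi]
    by_cases g1 : G a b <;> by_cases g2 : G b c <;>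
      simp only [g1, g2, if_true, if_false, ite_true, ite_false]
    · -- TT : need G a c
      have : G a c := by
        rcases e3 with h | h
        · exact h
        · exact absurd (Or.inl ⟨g1, g2, h⟩) hnc
      simp [this, g1, g2]
    · -- TF : G a b, ¬ G b c hence G c b
      have hcb : G c b := e2.resolve_left g2
      by_cases g3 : G a c <;> simp only [g3, ite_true, ite_false, if_true, if_false]
      · simp [hcb, g1, g3]
      · simp [e3.resolve_left g3, hcb, g1]
    · -- FT : ¬ G a b hence G b a
      have hba : G b a := e1.resolve_left g1
      by_cases g3 : G a c <;> simp only [g3, ite_true, ite_false, if_true, if_false]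
      · simp [hba, g2, g3]
      · simp [e3.resolve_left g3, hba, g2]
    · -- FF : G b a, G c b, need G c a
      have hba : G b a := e1.resolve_left g1
      have hcb : G c b := e2.resolve_left g2
      have hca : G c a := by
        rcases e3 with h | h
        · exact absurd (Or.inr ⟨hba, hcb, h⟩) hnc
        · exact h
      exact ⟨hcb, hba, hca⟩
  · -- injectivity via sort3
    have hrec : ∀ t ∈ (S3.filter (comp3 G)).filter fun t => ¬ cyc G t,
        sort3 (phi G t).1 (phi G t).2.1 (phi G t).2.2 = t := by
      rintro ⟨a, bc⟩ ht
      obtain ⟨b, c⟩ := bc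
      simp only [mem_filter, S3, mem_univ, true_and] at ht
      obtain ⟨⟨⟨hab, hbc⟩, _⟩, _⟩ := ht
      have hs := sort3_spec hab hbc
      simp only [phi]
      by_cases g1 : G a b <;> by_cases g2 : G b c <;> by_cases g3 : G a c <;>
        simp only [g1, g2, g3, if_true, if_false, ite_true, ite_false] <;>
      simp [hs.1, hs.2.1, hs.2.2.1, hs.2.2.2.1, hs.2.2.2.2.1, hs.2.2.2.2.2]
    intro t ht t' ht' heq
    have h1 := hrec t (by simpa using ht)
    have h2 := hrec t' (by simpa using ht')
    rw [← h1, ← h2, heq]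

end

end FourTransAux

/-- an oriented graph on 6 vertices with at least 13 arcs contains at
least 4 transitive triangles. -/
theorem four_transitive_triangles_on_six (G : Fin 6 → Fin 6 → Prop)
    (hG : IsOriented G) (hE : 13 ≤ arcCount G) :
    4 ≤ {p : Fin 6 × Fin 6 × Fin 6 | G p.1 p.2.1 ∧ G p.2.1 p.2.2 ∧ G p.1 p.2.2}.ncard := by
  classical
  haveI : ∀ a b, Decidable (G a b) := fun a b => Classical.dec _
  have hset : {p : Fin 6 × Fin 6 × Fin 6 | G p.1 p.2.1 ∧ G p.2.1 p.2.2 ∧ G p.1 p.2.2}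
      = ↑(Finset.univ.filter fun p : Fin 6 × Fin 6 × Fin 6 =>
          G p.1 p.2.1 ∧ G p.2.1 p.2.2 ∧ G p.1 p.2.2) := by
    ext p
    simp
  have harc : arcCount G
      = (Finset.univ.filter fun p : Fin 6 × Fin 6 => G p.1 p.2).card := by
    rw [arcCount]
    have : {p : Fin 6 × Fin 6 | G p.1 p.2}
        = ↑(Finset.univ.filter fun p : Fin 6 × Fin 6 => G p.1 p.2) := by
      ext p; simp
    rw [this, Set.ncard_coe_finset]
  rw [hset, Set.ncard_coe_finset]
  exact FourTransAux.main_count hG (harc ▸ hE)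
end

section
/- Let s, t ≥ 1 be integers and let G be an oriented graph on n vertices (n sufficiently large) with at least e·s^{1/t}·n^{2−1/t} arcs, where e is Euler's number. Then G contains at least (e/t)^t·n^t copies of the antidirected complete bipartite graph K⃗_{s,t} (with parts A of size s and B of size t, and all arcs directed from A to B). -/
/-- The number of copies of the antidirected complete bipartite graph `K⃗_{s,t}` in `G`:
pairs of disjoint vertex sets `(S, T)` with `|S| = s`, `|T| = t` and every arc from `S`
to `T` present. -/
noncomputable def kstCount {V : Type*} (G : V → V → Prop) (s t : ℕ) : ℕ :=
  {p : Finset V × Finset V | p.1.card = s ∧ p.2.card = t ∧ Disjoint p.1 p.2 ∧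
    ∀ a ∈ p.1, ∀ b ∈ p.2, G a b}.ncard

namespace KSTaux
open Finset
open scoped Classical

variable {n : ℕ}

noncomputable def outN (G : Fin n → Fin n → Prop) (a : Fin n) : Finset (Fin n) :=
  univ.filter (fun b => G a b)

noncomputable def inU (G : Fin n → Fin n → Prop) (T : Finset (Fin n)) : Finset (Fin n) :=
  univ.filter (fun a => ∀ b ∈ T, G a b)

lemma arc_eq (G : Fin n → Fin n → Prop) : arcCount G = ∑ a, (outN G a).card := by
  have h1 : {p : Fin n × Fin n | G p.1 p.2}
      = ↑(univ.filter (fun p : Fin n × Fin n => G p.1 p.2)) := by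
    ext p; simp
  rw [arcCount, h1, Set.ncard_coe_finset, Finset.card_filter, Fintype.sum_prod_type]
  exact Finset.sum_congr rfl fun a _ => by rw [outN, Finset.card_filter]

lemma kst_eq (G : Fin n → Fin n → Prop) (hG : IsOriented G) (s t : ℕ) :
    kstCount G s t = ∑ T ∈ powersetCard t (univ : Finset (Fin n)),
      ((inU G T).card.choose s) := by
  have h1 : {p : Finset (Fin n) × Finset (Fin n) | p.1.card = s ∧ p.2.card = t ∧
      Disjoint p.1 p.2 ∧ ∀ a ∈ p.1, ∀ b ∈ p.2, G a b}
      = ↑(univ.filter (fun p : Finset (Fin n) × Finset (Fin n) =>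
          p.1.card = s ∧ p.2.card = t ∧ Disjoint p.1 p.2 ∧ ∀ a ∈ p.1, ∀ b ∈ p.2, G a b)) := by
    ext p; simp
  rw [kstCount, h1, Set.ncard_coe_finset, Finset.card_filter, Fintype.sum_prod_type_right]
  have hpc : powersetCard t (univ : Finset (Fin n)) = univ.filter (fun T => T.card = t) := by
    ext T; simp [Finset.mem_powersetCard]
  rw [hpc, Finset.sum_filter]
  refine Finset.sum_congr rfl fun T _ => ?_
  by_cases hT : T.card = t
  · rw [if_pos hT, ← Finset.card_filter]
    have h2 : (univ.filter (fun S : Finset (Fin n) =>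
        S.card = s ∧ T.card = t ∧ Disjoint S T ∧ ∀ a ∈ S, ∀ b ∈ T, G a b))
        = (inU G T).powersetCard s := by
      ext S
      simp only [Finset.mem_filter, Finset.mem_univ, true_and, Finset.mem_powersetCard]
      constructor
      · rintro ⟨hc, -, -, harc⟩
        refine ⟨fun a ha => ?_, hc⟩
        simp only [inU, Finset.mem_filter, Finset.mem_univ, true_and]
        exact fun b hb => harc a ha b hb
      · rintro ⟨hsub, hc⟩
        have hmem : ∀ a ∈ S, ∀ b ∈ T, G a b := by
          intro a ha b hb
          have h3 := hsub ha
          simp only [inU, Finset.mem_filter, Finset.mem_univ, true_and] at h3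
          exact h3 b hb
        refine ⟨hc, hT, ?_, hmem⟩
        rw [Finset.disjoint_left]
        intro a haS haT
        exact (hG a a (hmem a haS a haT)).1 rfl
    rw [h2, Finset.card_powersetCard]
  · rw [if_neg hT, Finset.sum_eq_zero]
    intro S _
    rw [if_neg]
    rintro ⟨-, h, -⟩
    exact hT h

lemma double_count (G : Fin n → Fin n → Prop) (t : ℕ) :
    ∑ T ∈ powersetCard t (univ : Finset (Fin n)), (inU G T).card
      = ∑ a, ((outN G a).card.choose t) := by
  have hre : ∀ a : Fin n, (outN G a).card.choose t
      = ∑ T ∈ powersetCard t (univ : Finset (Fin n)), if T ⊆ outN G a then 1 else 0 := by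
    intro a
    rw [← Finset.card_filter, ← Finset.card_powersetCard t (outN G a)]
    congr 1
    ext T
    simp only [Finset.mem_powersetCard, Finset.mem_filter, Finset.subset_univ, true_and]
    tauto
  simp only [hre]
  rw [Finset.sum_comm]
  refine Finset.sum_congr rfl fun T _ => ?_
  rw [inU, Finset.card_filter]
  refine Finset.sum_congr rfl fun a _ => ?_
  have hiff : (T ⊆ outN G a) ↔ (∀ b ∈ T, G a b) := by
    simp [outN, Finset.subset_iff]
  simp [hiff]

end KSTaux
namespace KSTaux
open Finset

lemma exp_mul_pow_le (k : ℕ) (hk : 1 ≤ k) :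
    Real.exp 1 * (k:ℝ) ^ (k+1) ≤ ((k:ℝ)+1) ^ (k+1) := by
  have hc : (0:ℝ) < (k:ℝ)+1 := by positivity
  have h1 : -(1/((k:ℝ)+1)) + 1 ≤ Real.exp (-(1/((k:ℝ)+1))) := Real.add_one_le_exp _
  rw [Real.exp_neg] at h1
  have hE : 0 < Real.exp (1/((k:ℝ)+1)) := Real.exp_pos _
  have h2 : Real.exp (1/((k:ℝ)+1)) * (k:ℝ) ≤ (k:ℝ)+1 := by
    have h3 := mul_le_mul_of_nonneg_left h1 hE.le
    rw [mul_inv_cancel₀ (ne_of_gt hE)] at h3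
    have h4 : Real.exp (1/((k:ℝ)+1)) * (-(1/((k:ℝ)+1)) + 1) * ((k:ℝ)+1)
        ≤ 1 * ((k:ℝ)+1) := mul_le_mul_of_nonneg_right h3 hc.le
    have h5 : Real.exp (1/((k:ℝ)+1)) * (-(1/((k:ℝ)+1)) + 1) * ((k:ℝ)+1)
        = Real.exp (1/((k:ℝ)+1)) * (k:ℝ) := by
      field_simp
      ring
    rw [h5, one_mul] at h4
    exact h4
  have h6 : Real.exp 1 = Real.exp (1/((k:ℝ)+1)) ^ (k+1) := by
    rw [← Real.exp_nat_mul]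
    congr 1
    push_cast
    field_simp
  calc Real.exp 1 * (k:ℝ) ^ (k+1) = (Real.exp (1/((k:ℝ)+1)) * (k:ℝ)) ^ (k+1) := by
        rw [mul_pow, ← h6]
    _ ≤ ((k:ℝ)+1) ^ (k+1) := pow_le_pow_left₀ (by positivity) h2 _

lemma fact_epow_le (k : ℕ) (hk : 1 ≤ k) :
    (k.factorial : ℝ) * Real.exp 1 ^ (k - 1) ≤ (k : ℝ) ^ (k + 1) := by
  induction k, hk using Nat.le_induction with
  | base => simp
  | succ k hk ih =>
    have hkk : k + 1 - 1 = (k - 1) + 1 := by omega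
    rw [hkk, pow_succ]
    have hf : ((k+1).factorial : ℝ) = ((k:ℝ)+1) * (k.factorial : ℝ) := by
      rw [Nat.factorial_succ]; push_cast; ring
    have he : (0:ℝ) < Real.exp 1 := Real.exp_pos 1
    have h1 : ((k+1).factorial : ℝ) * (Real.exp 1 ^ (k-1) * Real.exp 1)
        ≤ ((k:ℝ)+1) * ((k:ℝ)^(k+1) * Real.exp 1) := by
      rw [hf]
      have h0 := mul_le_mul_of_nonneg_right ih he.le
      have h1' := mul_le_mul_of_nonneg_left h0 (by positivity : (0:ℝ) ≤ (k:ℝ)+1)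
      nlinarith [h1']
    have h2 : ((k:ℝ)+1) * ((k:ℝ)^(k+1) * Real.exp 1) ≤ ((k:ℝ)+1) * ((k:ℝ)+1)^(k+1) := by
      have h0 := exp_mul_pow_le k hk
      nlinarith [h0]
    have h3 : ((k:ℝ)+1) * ((k:ℝ)+1)^(k+1) = ((k:ℝ)+1)^(k+1+1) := by rw [pow_succ]; ring
    push_cast
    push_cast at h1 h2 h3
    linarith

lemma L2 (t : ℕ) (ht : 2 ≤ t) :
    Real.exp 1 * t + 1 ≤ 0.99 * Real.exp 1 ^ t := by
  induction t, ht using Nat.le_induction with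
  | base =>
    have h1 := Real.exp_one_gt_d9
    have h2 := Real.exp_one_lt_d9
    nlinarith [h1, h2]
  | succ t ht ih =>
    have h1 := Real.exp_one_gt_d9
    have htR : (2:ℝ) ≤ t := by exact_mod_cast ht
    have hpos : (0:ℝ) < Real.exp 1 ^ t := pow_pos (Real.exp_pos 1) t
    rw [pow_succ]
    push_cast
    nlinarith [ih, h1, htR, hpos]

lemma keyA (s : ℕ) (hs2 : 2 ≤ s) :
    Real.exp 1 * s ≤ Real.exp 1 ^ (s-1) * (0.99 * Real.exp 1 - 1) ^ s := by
  have he1 := Real.exp_one_gt_d9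
  have hb : (1.69:ℝ) ≤ 0.99 * Real.exp 1 - 1 := by nlinarith
  induction s, hs2 using Nat.le_induction with
  | base =>
    push_cast
    norm_num
    nlinarith [hb, Real.exp_pos 1, he1]
  | succ s hs2 ih =>
    have hss : s + 1 - 1 = (s - 1) + 1 := by omega
    rw [hss, pow_succ, pow_succ]
    have hsR : (2:ℝ) ≤ s := by exact_mod_cast hs2
    have heb : (4.5:ℝ) ≤ Real.exp 1 * (0.99 * Real.exp 1 - 1) := by nlinarith [he1]
    have key := mul_le_mul_of_nonneg_right ih
      (show (0:ℝ) ≤ Real.exp 1 * (0.99 * Real.exp 1 - 1) by nlinarith [he1])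
    have hs0 : (0:ℝ) ≤ (s:ℝ) := by linarith
    have h8 := mul_le_mul_of_nonneg_left heb hs0
    have h7 : Real.exp 1 * ((s:ℝ)+1) ≤ Real.exp 1 * (s:ℝ) * (Real.exp 1 * (0.99*Real.exp 1 - 1)) := by
      nlinarith [h8, hsR, he1]
    push_cast
    linarith [key, h7]

lemma keyB (t s : ℕ) (ht2 : 2 ≤ t) (hs : 1 ≤ s) :
    Real.exp 1 * s * t ≤ Real.exp 1 ^ (s-1) * (0.99 * Real.exp 1 ^ t - 1) ^ s := by
  have he1 := Real.exp_one_gt_d9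
  have htR : (2:ℝ) ≤ t := by exact_mod_cast ht2
  have hbt : Real.exp 1 * t ≤ 0.99 * Real.exp 1 ^ t - 1 := by
    have := L2 t ht2
    linarith
  have hb0 : (1:ℝ) ≤ 0.99 * Real.exp 1 ^ t - 1 := by
    nlinarith [hbt, he1, htR]
  induction s, hs using Nat.le_induction with
  | base =>
    simpa using hbt
  | succ s hs ih =>
    have hss : s + 1 - 1 = (s - 1) + 1 := by omega
    rw [hss, pow_succ, pow_succ]
    have hsR : (1:ℝ) ≤ s := by exact_mod_cast hs
    have heb : (2.7:ℝ) ≤ Real.exp 1 * (0.99 * Real.exp 1 ^ t - 1) := by nlinarith [he1, hb0]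
    have key := mul_le_mul_of_nonneg_right ih
      (show (0:ℝ) ≤ Real.exp 1 * (0.99 * Real.exp 1 ^ t - 1) by nlinarith [he1, hb0])
    have hs0 : (0:ℝ) ≤ (s:ℝ) := by linarith
    have h8 := mul_le_mul_of_nonneg_left heb hs0
    have h9 : (s:ℝ) + 1 ≤ (s:ℝ) * (Real.exp 1 * (0.99 * Real.exp 1 ^ t - 1)) := by
      nlinarith [h8, hsR]
    have h10 := mul_le_mul_of_nonneg_left h9
      (show (0:ℝ) ≤ Real.exp 1 * (t:ℝ) by positivity)
    have h7 : Real.exp 1 * ((s:ℝ)+1) * (t:ℝ)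
        ≤ Real.exp 1 * (s:ℝ) * (t:ℝ) * (Real.exp 1 * (0.99 * Real.exp 1 ^ t - 1)) := by
      nlinarith [h10]
    push_cast
    linarith [key, h7]

lemma keyL3 (s t : ℕ) (hs : 1 ≤ s) (ht : 1 ≤ t) (hne : ¬(s = 1 ∧ t = 1)) :
    Real.exp 1 * s * t ≤ Real.exp 1 ^ (s-1) * (0.99 * Real.exp 1 ^ t - 1) ^ s := by
  by_cases ht1 : t = 1
  · subst ht1
    have hs2 : 2 ≤ s := by omega
    have := keyA s hs2
    simpa using this
  · exact keyB t s (by omega) hs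

lemma final_ineq (s t : ℕ) (hs : 1 ≤ s) (ht : 1 ≤ t) (hne : ¬(s = 1 ∧ t = 1)) :
    Real.exp 1 ^ t * (t.factorial : ℝ) * (s.factorial : ℝ)
      ≤ (0.99 * Real.exp 1 ^ t - 1) ^ s * (s:ℝ) ^ s * (t:ℝ) ^ t := by
  set e := Real.exp 1 with he_def
  have hepos : (0:ℝ) < e := Real.exp_pos 1
  have k1 := fact_epow_le t ht
  have k2 := fact_epow_le s hs
  have k3 := keyL3 s t hs ht hne
  have hE : (0:ℝ) < e ^ (t-1) * e ^ (s-1) := by positivity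
  have het : e ^ t = e ^ (t-1) * e := by rw [← pow_succ]; congr 1; omega
  have hts : (t:ℝ) ^ (t+1) = (t:ℝ)^t * t := by rw [pow_succ]
  have hss : (s:ℝ) ^ (s+1) = (s:ℝ)^s * s := by rw [pow_succ]
  refine le_of_mul_le_mul_right ?_ hE
  calc e ^ t * (t.factorial:ℝ) * (s.factorial:ℝ) * (e ^ (t-1) * e ^ (s-1))
      = ((t.factorial:ℝ) * e^(t-1)) * ((s.factorial:ℝ) * e^(s-1)) * e^t := by ring
    _ ≤ (t:ℝ)^(t+1) * (s:ℝ)^(s+1) * e^t := by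
        have h1 : (0:ℝ) ≤ (t.factorial:ℝ) * e^(t-1) := by positivity
        have h2 : (0:ℝ) ≤ (s:ℝ)^(s+1) := by positivity
        have h3 : (0:ℝ) ≤ e^t := by positivity
        exact mul_le_mul_of_nonneg_right (mul_le_mul k1 k2 (by positivity) (by positivity)) h3
    _ = ((t:ℝ)^t * (s:ℝ)^s * e^(t-1)) * (e * s * t) := by
        rw [hts, hss, het]; ring
    _ ≤ ((t:ℝ)^t * (s:ℝ)^s * e^(t-1)) * (e^(s-1) * (0.99 * e^t - 1)^s) := by
        refine mul_le_mul_of_nonneg_left k3 (by positivity)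
    _ = (0.99 * e^t - 1)^s * (s:ℝ)^s * (t:ℝ)^t * (e^(t-1) * e^(s-1)) := by ring
end KSTaux
namespace KSTaux2
open Finset

lemma jensen_choose {ι : Type*} (F : Finset ι) (w : ι → ℕ) (r : ℕ) (hr : 1 ≤ r) :
    (∑ i ∈ F, ((w i + 1 - r : ℕ):ℝ))^r / (F.card:ℝ)^(r-1) / (r.factorial:ℝ)
      ≤ ∑ i ∈ F, ((w i).choose r : ℝ) := by
  have hJ := pow_sum_div_card_le_sum_pow (s := F)
    (f := fun i => ((w i + 1 - r : ℕ):ℝ)) (fun i _ => Nat.cast_nonneg _) (r-1)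
  rw [show r - 1 + 1 = r by omega] at hJ
  have h2 : ∑ i ∈ F, ((w i + 1 - r : ℕ):ℝ)^r / (r.factorial:ℝ)
      ≤ ∑ i ∈ F, ((w i).choose r : ℝ) := by
    refine Finset.sum_le_sum fun i _ => ?_
    have h3 := Nat.pow_le_choose (α := ℝ) r (w i)
    push_cast at h3 ⊢
    convert h3 using 2
  rw [← Finset.sum_div] at h2
  have hrf : (0:ℝ) < (r.factorial:ℝ) := by exact_mod_cast r.factorial_pos
  refine le_trans ?_ h2
  exact (div_le_div_iff_of_pos_right hrf).mpr hJ

lemma sum_trunc_lb {ι : Type*} (F : Finset ι) (w : ι → ℕ) (r : ℕ) :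
    (∑ i ∈ F, (w i:ℝ)) - ((r:ℝ) - 1) * F.card ≤ ∑ i ∈ F, ((w i + 1 - r : ℕ):ℝ) := by
  have h : ∀ i ∈ F, (w i:ℝ) - ((r:ℝ)-1) ≤ ((w i + 1 - r : ℕ):ℝ) := by
    intro i _
    rcases le_or_gt r (w i + 1) with h | h
    · rw [Nat.cast_sub h]
      push_cast
      linarith
    · have h0 : w i + 1 - r = 0 := by omega
      rw [h0]
      have h5 : (w i:ℝ) + 1 ≤ r := by exact_mod_cast h.le
      simp
      linarith
  calc (∑ i ∈ F, (w i:ℝ)) - ((r:ℝ)-1) * F.card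
      = ∑ i ∈ F, ((w i:ℝ) - ((r:ℝ)-1)) := by
        rw [Finset.sum_sub_distrib, Finset.sum_const, nsmul_eq_mul]
        ring
    _ ≤ _ := Finset.sum_le_sum h

end KSTaux2
lemma KST_aux_estep (E r x m : ℝ) (hE : 0 < E) (hr : 1 ≤ r) (hx : 0 ≤ x)
    (h : E * r * x ≤ m) : E * x ≤ m := by
  have h2 : 0 ≤ (r - 1) * (E * x) := mul_nonneg (by linarith) (mul_nonneg hE.le hx)
  nlinarith [h2, h]


set_option maxHeartbeats 3200000 in
/-- for integers `s, t ≥ 1` and all sufficiently large `n`, every oriented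
graph on `n` vertices with at least `e·s^{1/t}·n^{2−1/t}` arcs contains at least
`(e/t)^t·n^t` copies of `K⃗_{s,t}`. -/
theorem kst_supersaturation (s t : ℕ) (hs : 1 ≤ s) (ht : 1 ≤ t) :
    ∃ n₀ : ℕ, ∀ n : ℕ, n₀ ≤ n → ∀ G : Fin n → Fin n → Prop, IsOriented G →
      Real.exp 1 * (s : ℝ) ^ ((1 : ℝ) / t) * (n : ℝ) ^ ((2 : ℝ) - 1 / t) ≤
        (arcCount G : ℝ) →
      (Real.exp 1 / t) ^ t * (n : ℝ) ^ t ≤ (kstCount G s t : ℝ) := by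
  classical
  refine ⟨(100 * t ^ 2) ^ 2 + t + 1, fun n hn G hG harcs => ?_⟩
  have he1 : (2.7182818283 : ℝ) ≤ Real.exp 1 := Real.exp_one_gt_d9.le
  have hepos : (0:ℝ) < Real.exp 1 := Real.exp_pos 1
  have hn1 : 1 ≤ n := by omega
  have hnt : t ≤ n := by omega
  have hnR : (1:ℝ) ≤ (n:ℝ) := by exact_mod_cast hn1
  have hnR0 : (0:ℝ) < (n:ℝ) := by linarith
  have htR : (1:ℝ) ≤ (t:ℝ) := by exact_mod_cast ht
  have htR0 : (0:ℝ) < (t:ℝ) := by linarith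
  have hsR : (1:ℝ) ≤ (s:ℝ) := by exact_mod_cast hs
  have htfpos : (0:ℝ) < (t.factorial:ℝ) := by exact_mod_cast t.factorial_pos
  have hsfpos : (0:ℝ) < (s.factorial:ℝ) := by exact_mod_cast s.factorial_pos
  have hm_eq : (arcCount G : ℝ) = ∑ a, ((KSTaux.outN G a).card : ℝ) := by
    rw [KSTaux.arc_eq G]
    push_cast
    rfl
  have hm0 : (0:ℝ) ≤ (arcCount G:ℝ) := Nat.cast_nonneg _
  have hdcA : ∑ T ∈ Finset.powersetCard t Finset.univ, ((KSTaux.inU G T).card : ℝ)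
      = ∑ a : Fin n, (((KSTaux.outN G a).card).choose t : ℝ) := by
    exact_mod_cast congrArg (Nat.cast : ℕ → ℝ) (KSTaux.double_count G t)
  have hkst_eq : (kstCount G s t : ℝ) = ∑ T ∈ Finset.powersetCard t Finset.univ,
      (((KSTaux.inU G T).card).choose s : ℝ) := by
    rw [KSTaux.kst_eq G hG s t]
    push_cast
    rfl
  by_cases hne : s = 1 ∧ t = 1
  · -- special case s = t = 1
    obtain ⟨rfl, rfl⟩ := hne
    have h1 : (kstCount G 1 1 : ℝ) = (arcCount G : ℝ) := by
      rw [hkst_eq]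
      simp only [Nat.choose_one_right]
      rw [hdcA]
      simp only [Nat.choose_one_right]
      rw [hm_eq]
    rw [h1]
    have h2 : Real.exp 1 * (1:ℝ) ^ ((1:ℝ)/(1:ℕ)) * (n:ℝ) ^ ((2:ℝ) - 1/(1:ℕ))
        = Real.exp 1 * (n:ℝ) := by
      norm_num [Real.one_rpow, Real.rpow_one]
    push_cast at harcs h2 ⊢
    rw [h2] at harcs
    norm_num
    linarith only [harcs]
  · -- main case
    -- arithmetic facts about the hypothesis
    have hrp1 : (1:ℝ) ≤ (s:ℝ) ^ ((1:ℝ)/t) := by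
      calc (1:ℝ) = (1:ℝ) ^ ((1:ℝ)/(t:ℝ)) := (Real.one_rpow _).symm
        _ ≤ (s:ℝ) ^ ((1:ℝ)/(t:ℝ)) := Real.rpow_le_rpow zero_le_one hsR (by positivity)
    have hrpn0 : (0:ℝ) ≤ (n:ℝ) ^ ((2:ℝ)-1/t) := Real.rpow_nonneg hnR0.le _
    have hstep0 : Real.exp 1 * (n:ℝ) ^ ((2:ℝ) - 1/t) ≤ (arcCount G:ℝ) :=
      KST_aux_estep _ _ _ _ hepos hrp1 hrpn0 harcs
    have hnsplit : (n:ℝ) ^ ((2:ℝ) - 1/t) = (n:ℝ) * (n:ℝ) ^ ((1:ℝ) - 1/t) := by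
      rw [show (2:ℝ) - 1/(t:ℝ) = 1 + (1 - 1/t) by ring, Real.rpow_add hnR0, Real.rpow_one]
    have hC1 : ((t:ℝ) - 1) * n * (100 * t) ≤ (arcCount G:ℝ) := by
      rcases Nat.lt_or_ge t 2 with h2 | h2
      · have ht1 : t = 1 := by omega
        subst ht1
        norm_num
      · have ht2R : (2:ℝ) ≤ t := by exact_mod_cast h2
        have hhalf : (n:ℝ) ^ ((1:ℝ)/2) ≤ (n:ℝ) ^ ((1:ℝ) - 1/t) := by
          apply Real.rpow_le_rpow_of_exponent_le hnR
          have h3 : 1/(t:ℝ) ≤ 1/2 := by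
            rw [div_le_div_iff₀ htR0 (by norm_num)]
            linarith only [ht2R]
          linarith only [h3]
        have hbig : (100*(t:ℝ)^2)^2 ≤ (n:ℝ) := by
          have h4 : (100*t^2)^2 ≤ n := by omega
          have h5 : (((100*t^2)^2 : ℕ):ℝ) ≤ (n:ℝ) := by exact_mod_cast h4
          push_cast at h5
          linarith only [h5]
        have hsq : (100 * (t:ℝ)^2) ≤ (n:ℝ) ^ ((1:ℝ)/2) := by
          have h6 : ((100*(t:ℝ)^2)^2) ^ ((1:ℝ)/2) = 100*(t:ℝ)^2 := by
            rw [← Real.rpow_natCast (100*(t:ℝ)^2) 2, ← Real.rpow_mul (by positivity)]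
            norm_num
          calc 100*(t:ℝ)^2 = ((100*(t:ℝ)^2)^2) ^ ((1:ℝ)/2) := h6.symm
            _ ≤ (n:ℝ) ^ ((1:ℝ)/2) := Real.rpow_le_rpow (by positivity) hbig (by norm_num)
        have h5 : ((t:ℝ)-1)*(100*t) ≤ 100*(t:ℝ)^2 := by
          have he5 : ((t:ℝ)-1)*(100*t) = 100*(t:ℝ)^2 - 100*t := by ring
          rw [he5]
          linarith only [htR0]
        have h6 : (0:ℝ) ≤ (n:ℝ) := hnR0.le
        have h8 : (1:ℝ) * (n:ℝ)^((2:ℝ)-1/t) ≤ Real.exp 1 * (n:ℝ)^((2:ℝ)-1/t) :=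
          mul_le_mul_of_nonneg_right (by linarith only [he1]) hrpn0
        have h7 : (n:ℝ) * (n:ℝ)^((1:ℝ)-1/t) ≤ (arcCount G:ℝ) := by
          rw [← hnsplit]
          linarith only [h8, hstep0]
        calc ((t:ℝ)-1)*n*(100*t) = n * (((t:ℝ)-1)*(100*t)) := by ring
          _ ≤ n * (100*(t:ℝ)^2) := mul_le_mul_of_nonneg_left h5 h6
          _ ≤ n * ((n:ℝ)^((1:ℝ)/2)) := mul_le_mul_of_nonneg_left hsq h6
          _ ≤ n * (n:ℝ)^((1:ℝ)-1/t) := mul_le_mul_of_nonneg_left hhalf h6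
          _ ≤ (arcCount G:ℝ) := h7
    have hmt : Real.exp 1 ^ t * s * (n:ℝ) ^ (2*t-1) ≤ (arcCount G:ℝ) ^ t := by
      have h0 : (0:ℝ) ≤ Real.exp 1 * (s:ℝ)^((1:ℝ)/t) * (n:ℝ)^((2:ℝ)-1/t) := by positivity
      have h1 := pow_le_pow_left₀ h0 harcs t
      have hsrt : ((s:ℝ)^((1:ℝ)/(t:ℝ)))^t = (s:ℝ) := by
        rw [← Real.rpow_natCast ((s:ℝ)^((1:ℝ)/(t:ℝ))) t, ← Real.rpow_mul (Nat.cast_nonneg s),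
          one_div_mul_cancel (ne_of_gt htR0), Real.rpow_one]
      have hnrt : ((n:ℝ)^((2:ℝ)-1/(t:ℝ)))^t = (n:ℝ)^(2*t-1) := by
        rw [← Real.rpow_natCast ((n:ℝ)^((2:ℝ)-1/(t:ℝ))) t, ← Real.rpow_mul hnR0.le]
        have he : ((2:ℝ)-1/(t:ℝ))*(t:ℝ) = ((2*t-1:ℕ):ℝ) := by
          have hc : ((2*t-1:ℕ):ℝ) = 2*(t:ℝ)-1 := by
            push_cast [Nat.cast_sub (by omega : 1 ≤ 2*t)]
            ring
          rw [hc]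
          field_simp
        rw [he, Real.rpow_natCast]
      calc Real.exp 1^t * s * (n:ℝ)^(2*t-1)
          = (Real.exp 1 * (s:ℝ)^((1:ℝ)/(t:ℝ)) * (n:ℝ)^((2:ℝ)-1/(t:ℝ)))^t := by
            rw [mul_pow, mul_pow, hsrt, hnrt]
        _ ≤ (arcCount G:ℝ)^t := h1
    -- Step A : lower bound on A = ∑ choose (outdeg) t
    have hX1 : (arcCount G:ℝ) - ((t:ℝ)-1) * n
        ≤ ∑ a : Fin n, (((KSTaux.outN G a).card + 1 - t : ℕ) : ℝ) := by
      have h := KSTaux2.sum_trunc_lb Finset.univ (fun a : Fin n => (KSTaux.outN G a).card) t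
      rw [Finset.card_univ, Fintype.card_fin] at h
      calc (arcCount G:ℝ) - ((t:ℝ)-1)*n
          = (∑ a : Fin n, ((KSTaux.outN G a).card:ℝ)) - ((t:ℝ)-1)*n := by rw [hm_eq]
        _ ≤ _ := h
    have hX0 : (0:ℝ) ≤ ∑ a : Fin n, (((KSTaux.outN G a).card + 1 - t : ℕ) : ℝ) :=
      Finset.sum_nonneg fun a _ => Nat.cast_nonneg _
    have h100 : ((t:ℝ)-1) * n ≤ (arcCount G:ℝ) / (100*t) := by
      rw [le_div_iff₀ (by positivity)]
      exact hC1
    have hc10 : (0:ℝ) ≤ 1 - 1/(100*(t:ℝ)) := by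
      have hle : 1/(100*(t:ℝ)) ≤ 1 := by
        rw [div_le_one (by positivity)]
        linarith only [htR]
      linarith only [hle]
    have hXm : (arcCount G:ℝ) * (1 - 1/(100*(t:ℝ)))
        ≤ ∑ a : Fin n, (((KSTaux.outN G a).card + 1 - t : ℕ) : ℝ) := by
      have hh : (arcCount G:ℝ) * (1 - 1/(100*(t:ℝ)))
          = (arcCount G:ℝ) - (arcCount G:ℝ)/(100*t) := by ring
      linarith only [hX1, h100, hh]
    have hBern : (0.99:ℝ) ≤ (1 - 1/(100*(t:ℝ)))^t := by
      have h1 := one_add_mul_le_pow (a := -(1/(100*(t:ℝ)))) (by linarith only [hc10]) t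
      have h2 : 1 + (t:ℝ) * (-(1/(100*(t:ℝ)))) = 1 - 1/100 := by
        field_simp
        ring
      rw [h2] at h1
      have h3 : ((1:ℝ) + -(1/(100*(t:ℝ))))^t = (1 - 1/(100*(t:ℝ)))^t := by ring_nf
      rw [h3] at h1
      linarith only [h1]
    have hXt : (0.99:ℝ) * (arcCount G:ℝ)^t
        ≤ (∑ a : Fin n, (((KSTaux.outN G a).card + 1 - t : ℕ) : ℝ))^t := by
      calc (0.99:ℝ)*(arcCount G:ℝ)^t
          ≤ (1 - 1/(100*(t:ℝ)))^t * (arcCount G:ℝ)^t :=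
            mul_le_mul_of_nonneg_right hBern (pow_nonneg hm0 t)
        _ = ((arcCount G:ℝ)*(1 - 1/(100*(t:ℝ))))^t := by rw [mul_pow]; ring
        _ ≤ _ := pow_le_pow_left₀ (mul_nonneg hm0 hc10) hXm t
    have hA1 : (∑ a : Fin n, (((KSTaux.outN G a).card + 1 - t : ℕ):ℝ))^t
          / (n:ℝ)^(t-1) / (t.factorial:ℝ)
        ≤ ∑ a : Fin n, (((KSTaux.outN G a).card).choose t : ℝ) := by
      have h := KSTaux2.jensen_choose Finset.univ
        (fun a : Fin n => (KSTaux.outN G a).card) t ht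
      rw [Finset.card_univ, Fintype.card_fin] at h
      exact h
    have hnt1pos : (0:ℝ) < (n:ℝ)^(t-1) := by positivity
    have hnpow : (n:ℝ)^(2*t-1) = (n:ℝ)^t * (n:ℝ)^(t-1) := by
      rw [← pow_add]
      congr 1
      omega
    have hA_lb : (0.99:ℝ) * Real.exp 1^t * s * (n:ℝ)^t / (t.factorial:ℝ)
        ≤ ∑ a : Fin n, (((KSTaux.outN G a).card).choose t : ℝ) := by
      have h1 : (0.99:ℝ) * (Real.exp 1^t * s * (n:ℝ)^(2*t-1))
          ≤ (∑ a : Fin n, (((KSTaux.outN G a).card + 1 - t : ℕ) : ℝ))^t := by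
        have h0 := mul_le_mul_of_nonneg_left hmt (by norm_num : (0:ℝ) ≤ 0.99)
        linarith only [hXt, h0]
      have h3 : (0.99:ℝ)*Real.exp 1^t*(s:ℝ)*(n:ℝ)^t
          ≤ (∑ a : Fin n, (((KSTaux.outN G a).card + 1 - t : ℕ) : ℝ))^t/(n:ℝ)^(t-1) := by
        rw [le_div_iff₀ hnt1pos]
        calc (0.99:ℝ)*Real.exp 1^t*(s:ℝ)*(n:ℝ)^t*(n:ℝ)^(t-1)
            = 0.99*(Real.exp 1^t*s*(n:ℝ)^(2*t-1)) := by rw [hnpow]; ring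
          _ ≤ _ := h1
      refine le_trans ?_ hA1
      rw [div_div, div_le_div_iff₀ htfpos (by positivity : (0:ℝ) < (n:ℝ)^(t-1) * (t.factorial:ℝ))]
      calc (0.99:ℝ) * Real.exp 1^t * s * (n:ℝ)^t * ((n:ℝ)^(t-1) * (t.factorial:ℝ))
          = (0.99*(Real.exp 1^t*s*(n:ℝ)^(2*t-1))) * (t.factorial:ℝ) := by rw [hnpow]; ring
        _ ≤ (∑ a : Fin n, (((KSTaux.outN G a).card + 1 - t : ℕ) : ℝ))^t * (t.factorial:ℝ) :=
            mul_le_mul_of_nonneg_right h1 htfpos.le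
    -- Step B : Jensen over t-sets
    have hNTpos : (0:ℝ) < ((n.choose t : ℕ):ℝ) := by exact_mod_cast Nat.choose_pos hnt
    have hcardT : (Finset.powersetCard t (Finset.univ : Finset (Fin n))).card = n.choose t := by
      rw [Finset.card_powersetCard, Finset.card_univ, Fintype.card_fin]
    have hP1 : (∑ a : Fin n, (((KSTaux.outN G a).card).choose t : ℝ))
          - ((s:ℝ)-1) * ((n.choose t : ℕ):ℝ)
        ≤ ∑ T ∈ Finset.powersetCard t Finset.univ,
            (((KSTaux.inU G T).card + 1 - s : ℕ):ℝ) := by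
      have h := KSTaux2.sum_trunc_lb (Finset.powersetCard t (Finset.univ : Finset (Fin n)))
        (fun T => (KSTaux.inU G T).card) s
      rw [hcardT, hdcA] at h
      exact h
    have hkJ : (∑ T ∈ Finset.powersetCard t Finset.univ,
          (((KSTaux.inU G T).card + 1 - s : ℕ):ℝ))^s
          / ((n.choose t : ℕ):ℝ)^(s-1) / (s.factorial:ℝ)
        ≤ ∑ T ∈ Finset.powersetCard t Finset.univ,
            (((KSTaux.inU G T).card).choose s : ℝ) := by
      have h := KSTaux2.jensen_choose (Finset.powersetCard t (Finset.univ : Finset (Fin n)))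
        (fun T => (KSTaux.inU G T).card) s hs
      rw [hcardT] at h
      exact h
    -- Q and its bound
    have het1 : Real.exp 1 ≤ Real.exp 1^t := by
      calc Real.exp 1 = Real.exp 1^1 := (pow_one _).symm
        _ ≤ Real.exp 1^t := pow_le_pow_right₀ (by linarith only [he1]) ht
    have hb169 : (1.69:ℝ) ≤ 0.99 * Real.exp 1^t - 1 := by linarith only [he1, het1]
    have hb0 : (0:ℝ) ≤ 0.99 * Real.exp 1^t - 1 := by linarith only [hb169]
    have hNTub : ((n.choose t : ℕ):ℝ) ≤ (n:ℝ)^t / (t.factorial:ℝ) := by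
      have h := Nat.choose_le_pow_div (α := ℝ) t n
      push_cast at h
      exact h
    have hQP : (0.99 * Real.exp 1^t - 1) * s * (n:ℝ)^t / (t.factorial:ℝ)
        ≤ ∑ T ∈ Finset.powersetCard t Finset.univ,
            (((KSTaux.inU G T).card + 1 - s : ℕ):ℝ) := by
      have hpos : (0:ℝ) ≤ (n:ℝ)^t/(t.factorial:ℝ) := by positivity
      have hA_lb' : ((0.99 * Real.exp 1^t - 1) * (s:ℝ) + (s:ℝ)) * ((n:ℝ)^t/(t.factorial:ℝ))
          ≤ ∑ a : Fin n, (((KSTaux.outN G a).card).choose t : ℝ) := by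
        have heq : ((0.99 * Real.exp 1^t - 1) * (s:ℝ) + (s:ℝ)) * ((n:ℝ)^t/(t.factorial:ℝ))
            = 0.99 * Real.exp 1^t * s * (n:ℝ)^t / (t.factorial:ℝ) := by ring
        rw [heq]
        exact hA_lb
      have h1 : ((s:ℝ)-1)*((n.choose t : ℕ):ℝ) ≤ ((s:ℝ)-1)*((n:ℝ)^t/(t.factorial:ℝ)) :=
        mul_le_mul_of_nonneg_left hNTub (by linarith only [hsR])
      have heq2 : (0.99 * Real.exp 1^t - 1) * s * (n:ℝ)^t / (t.factorial:ℝ)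
          = (0.99 * Real.exp 1^t - 1) * s * ((n:ℝ)^t/(t.factorial:ℝ)) := by ring
      rw [heq2]
      linarith only [hA_lb', h1, hP1, hpos]
    have hQ0 : (0:ℝ) ≤ (0.99 * Real.exp 1^t - 1) * s * (n:ℝ)^t / (t.factorial:ℝ) := by
      apply div_nonneg _ htfpos.le
      apply mul_nonneg (mul_nonneg hb0 (by linarith only [hsR])) (by positivity)
    have hP0 : (0:ℝ) ≤ ∑ T ∈ Finset.powersetCard t Finset.univ,
        (((KSTaux.inU G T).card + 1 - s : ℕ):ℝ) :=
      Finset.sum_nonneg fun T _ => Nat.cast_nonneg _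
    have hPQs : ((0.99 * Real.exp 1^t - 1) * s * (n:ℝ)^t / (t.factorial:ℝ))^s
        ≤ (∑ T ∈ Finset.powersetCard t Finset.univ,
            (((KSTaux.inU G T).card + 1 - s : ℕ):ℝ))^s :=
      pow_le_pow_left₀ hQ0 hQP s
    -- final chain
    have hkey := KSTaux.final_ineq s t hs ht hne
    have hYpos : (0:ℝ) < (n:ℝ)^t / (t.factorial:ℝ) := by positivity
    have hfinal : (Real.exp 1/(t:ℝ))^t * (n:ℝ)^t
        ≤ ((0.99 * Real.exp 1^t - 1) * s * (n:ℝ)^t / (t.factorial:ℝ))^s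
            / ((n.choose t : ℕ):ℝ)^(s-1) / (s.factorial:ℝ) := by
      have hQeq : ((0.99 * Real.exp 1^t - 1) * s * (n:ℝ)^t / (t.factorial:ℝ))^s
          = (0.99 * Real.exp 1^t - 1)^s * (s:ℝ)^s * ((n:ℝ)^t/(t.factorial:ℝ))^s := by
        rw [show (0.99 * Real.exp 1^t - 1) * s * (n:ℝ)^t / (t.factorial:ℝ)
          = (0.99 * Real.exp 1^t - 1) * (s:ℝ) * ((n:ℝ)^t/(t.factorial:ℝ)) by ring]
        rw [mul_pow, mul_pow]
      have hNTp : (0:ℝ) < ((n.choose t : ℕ):ℝ)^(s-1) := pow_pos hNTpos _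
      have hNTub2 : ((n.choose t : ℕ):ℝ)^(s-1) ≤ ((n:ℝ)^t/(t.factorial:ℝ))^(s-1) :=
        pow_le_pow_left₀ hNTpos.le hNTub _
      have hYs : ((n:ℝ)^t/(t.factorial:ℝ))^s
          = ((n:ℝ)^t/(t.factorial:ℝ))^(s-1) * ((n:ℝ)^t/(t.factorial:ℝ)) := by
        rw [← pow_succ]
        congr 1
        omega
      have hnum0 : (0:ℝ) ≤ (0.99 * Real.exp 1^t - 1)^s * (s:ℝ)^s * ((n:ℝ)^t/(t.factorial:ℝ)) := by
        apply mul_nonneg (mul_nonneg (pow_nonneg hb0 s) (by positivity)) hYpos.le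
      have h21 : (0.99 * Real.exp 1^t - 1)^s * (s:ℝ)^s * ((n:ℝ)^t/(t.factorial:ℝ))
            * ((n.choose t : ℕ):ℝ)^(s-1)
          ≤ (0.99 * Real.exp 1^t - 1)^s * (s:ℝ)^s * ((n:ℝ)^t/(t.factorial:ℝ))^s := by
        rw [hYs]
        calc (0.99 * Real.exp 1^t - 1)^s * (s:ℝ)^s * ((n:ℝ)^t/(t.factorial:ℝ))
              * ((n.choose t : ℕ):ℝ)^(s-1)
            ≤ (0.99 * Real.exp 1^t - 1)^s * (s:ℝ)^s * ((n:ℝ)^t/(t.factorial:ℝ))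
              * ((n:ℝ)^t/(t.factorial:ℝ))^(s-1) := mul_le_mul_of_nonneg_left hNTub2 hnum0
          _ = (0.99 * Real.exp 1^t - 1)^s * (s:ℝ)^s
              * (((n:ℝ)^t/(t.factorial:ℝ))^(s-1) * ((n:ℝ)^t/(t.factorial:ℝ))) := by ring
      have core : (Real.exp 1^t * ((n:ℝ)^t * (s.factorial:ℝ))) / (t:ℝ)^t
          ≤ ((0.99*Real.exp 1^t-1)^s * (s:ℝ)^s * (n:ℝ)^t) / (t.factorial:ℝ) := by
        rw [div_le_div_iff₀ (by positivity) htfpos]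
        have hk2 := mul_le_mul_of_nonneg_right hkey (by positivity : (0:ℝ) ≤ (n:ℝ)^t)
        linarith only [hk2]
      have core' : (Real.exp 1/(t:ℝ))^t * (n:ℝ)^t * (s.factorial:ℝ)
          ≤ (0.99*Real.exp 1^t-1)^s * (s:ℝ)^s * ((n:ℝ)^t/(t.factorial:ℝ)) := by
        have e1 : (Real.exp 1/(t:ℝ))^t * (n:ℝ)^t * (s.factorial:ℝ)
            = (Real.exp 1^t * ((n:ℝ)^t * (s.factorial:ℝ)))/(t:ℝ)^t := by
          rw [div_pow]; ring
        have e2 : (0.99*Real.exp 1^t-1)^s * (s:ℝ)^s * ((n:ℝ)^t/(t.factorial:ℝ))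
            = ((0.99*Real.exp 1^t-1)^s * (s:ℝ)^s * (n:ℝ)^t)/(t.factorial:ℝ) := by ring
        rw [e1, e2]
        exact core
      rw [div_div, le_div_iff₀ (by positivity : (0:ℝ) < ((n.choose t : ℕ):ℝ)^(s-1) * (s.factorial:ℝ))]
      calc (Real.exp 1/(t:ℝ))^t * (n:ℝ)^t * (((n.choose t : ℕ):ℝ)^(s-1) * (s.factorial:ℝ))
          = ((Real.exp 1/(t:ℝ))^t * (n:ℝ)^t * (s.factorial:ℝ)) * ((n.choose t : ℕ):ℝ)^(s-1) := by
            ring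
        _ ≤ ((Real.exp 1/(t:ℝ))^t * (n:ℝ)^t * (s.factorial:ℝ))
              * ((n:ℝ)^t/(t.factorial:ℝ))^(s-1) := by
            exact mul_le_mul_of_nonneg_left hNTub2 (by positivity)
        _ ≤ ((0.99*Real.exp 1^t-1)^s * (s:ℝ)^s * ((n:ℝ)^t/(t.factorial:ℝ)))
              * ((n:ℝ)^t/(t.factorial:ℝ))^(s-1) :=
            mul_le_mul_of_nonneg_right core' (pow_nonneg hYpos.le _)
        _ = (0.99*Real.exp 1^t-1)^s * (s:ℝ)^s * ((n:ℝ)^t/(t.factorial:ℝ))^s := by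
            rw [hYs]; ring
        _ = ((0.99 * Real.exp 1^t - 1) * s * (n:ℝ)^t / (t.factorial:ℝ))^s := hQeq.symm
    have hNTp : (0:ℝ) < ((n.choose t : ℕ):ℝ)^(s-1) := pow_pos hNTpos _
    calc (Real.exp 1/(t:ℝ))^t * (n:ℝ)^t
        ≤ ((0.99 * Real.exp 1^t - 1) * s * (n:ℝ)^t / (t.factorial:ℝ))^s
            / ((n.choose t : ℕ):ℝ)^(s-1) / (s.factorial:ℝ) := hfinal
      _ ≤ (∑ T ∈ Finset.powersetCard t Finset.univ,
            (((KSTaux.inU G T).card + 1 - s : ℕ):ℝ))^s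
            / ((n.choose t : ℕ):ℝ)^(s-1) / (s.factorial:ℝ) :=
          (div_le_div_iff_of_pos_right hsfpos).mpr ((div_le_div_iff_of_pos_right hNTp).mpr hPQs)
      _ ≤ ∑ T ∈ Finset.powersetCard t Finset.univ, (((KSTaux.inU G T).card).choose s : ℝ) := hkJ
      _ = (kstCount G s t : ℝ) := hkst_eq.symm
end
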